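/- arXiv:2304.07692 — 6 statements merged into one kernel-verified Lean document; each statement's English description precedes it below -/
import Mathlib

section
/- Let M be a module over a commutative ring R such that every proper submodule is contained in a maximal submodule. Let D(M) be the set of all finitely generated proper submodules of M with the structure-space topology (closed subbasis C(N) = {L ∈ D(M) : N ⊆ L}). If D(M) is quasi-compact, then every maximal submodule of M is finitely generated (hence lies in D(M)). -/
open TopologicalSpace

/-- The structure-space topology on a set `D` of submodules: generated by the
closed subbasis `C(N) = {L ∈ D | N ≤ L}`, i.e. by the open subbasis of their complements. -/
def structTop (R M : Type*) [CommRing R] [AddCommGroup M] [Module R M]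
    (D : Set (Submodule R M)) : TopologicalSpace D :=
  TopologicalSpace.generateFrom
    {U : Set D | ∃ N : Submodule R M, U = {L : D | ¬ N ≤ L.1}}

theorem stmt_5 {R M : Type*} [CommRing R] [AddCommGroup M] [Module R M]
    (hmax : ∀ N : Submodule R M, N ≠ ⊤ → ∃ L : Submodule R M, IsCoatom L ∧ N ≤ L)
    (hcompact : @CompactSpace {L : Submodule R M | L ≠ ⊤ ∧ L.FG}
      (structTop R M {L : Submodule R M | L ≠ ⊤ ∧ L.FG})) :
    ∀ L : Submodule R M, IsCoatom L → L.FG ∧ L ∈ {L : Submodule R M | L ≠ ⊤ ∧ L.FG} := by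
  intro P hP
  classical
  set D := {L : Submodule R M | L ≠ ⊤ ∧ L.FG} with hD
  letI : TopologicalSpace D := structTop R M D
  -- closed family indexed by elements of P
  set Z : P → Set D := fun x => {L : D | (x : M) ∈ L.1} with hZ
  have hZclosed : ∀ x : P, IsClosed (Z x) := by
    intro x
    have : Z x = {L : D | ¬ (Submodule.span R {(x : M)}) ≤ L.1}ᶜ := by
      ext L
      simp [hZ, Submodule.span_singleton_le_iff_mem]
    rw [this]
    exact isClosed_compl_iff.mpr
      (TopologicalSpace.isOpen_generateFrom_of_mem ⟨Submodule.span R {(x : M)}, rfl⟩)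
  have hcomp : IsCompact (Set.univ : Set D) := isCompact_univ
  have hne : (Set.univ ∩ ⋂ x : P, Z x).Nonempty := by
    by_contra h
    rw [Set.not_nonempty_iff_eq_empty] at h
    obtain ⟨t, ht⟩ := hcomp.elim_finite_subfamily_closed Z hZclosed h
    -- the span of the finite set t is in D and in every Z x for x ∈ t
    set s : Finset M := t.image (fun x : P => (x : M)) with hs
    set N : Submodule R M := Submodule.span R (s : Set M) with hN
    have hNle : N ≤ P := by
      rw [hN, Submodule.span_le]
      intro y hy
      simp only [hs, Finset.coe_image, Set.mem_image, Finset.mem_coe] at hy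
      obtain ⟨x, _, rfl⟩ := hy
      exact x.2
    have hNne : N ≠ ⊤ := fun h' => hP.1 (top_le_iff.mp (h' ▸ hNle))
    have hNfg : N.FG := ⟨s, rfl⟩
    have hNmem : N ∈ D := ⟨hNne, hNfg⟩
    have : (⟨N, hNmem⟩ : D) ∈ Set.univ ∩ ⋂ x ∈ t, Z x := by
      refine ⟨trivial, ?_⟩
      simp only [Set.mem_iInter]
      intro x hx
      exact Submodule.subset_span (by
        simp only [hs, Finset.coe_image, Set.mem_image, Finset.mem_coe]
        exact ⟨x, hx, rfl⟩)
    rw [ht] at this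
    exact this
  obtain ⟨L, -, hL⟩ := hne
  simp only [Set.mem_iInter] at hL
  have hPL : P ≤ L.1 := fun x hx => hL ⟨x, hx⟩
  have : P = L.1 := by
    rcases lt_or_eq_of_le hPL with h | h
    · exact absurd (hP.2 _ h) L.2.1
    · exact h
  rw [this]
  exact ⟨L.2.2, L.2⟩
end

section
/- Let M be a Noetherian module over a commutative ring R and let D(M) be any set of proper submodules of M equipped with the structure-space topology (closed subbasis C(N) = {L ∈ D(M) : N ⊆ L}). Then D(M) is quasi-compact. -/
open TopologicalSpace

theorem stmt_6 {R M : Type*} [CommRing R] [AddCommGroup M] [Module R M]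
    [IsNoetherian R M] (D : Set (Submodule R M)) (hD : ∀ L ∈ D, L ≠ ⊤) :
    @CompactSpace D (structTop R M D) := by
  letI := structTop R M D
  constructor
  rw [isCompact_iff_ultrafilter_le_nhds]
  intro F _
  -- the set of submodules N with C(N) ∈ F
  set S : Set (Submodule R M) := {N | {L : D | N ≤ L.1} ∈ F} with hS
  have hbot : (⊥ : Submodule R M) ∈ S := by
    simp only [hS, Set.mem_setOf_eq]
    exact Filter.univ_mem' fun L => Set.mem_setOf_eq ▸ bot_le
  -- S has a maximal element by Noetherianity
  obtain ⟨N₀, hN₀S, hN₀max⟩ :=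
    set_has_maximal_iff_noetherian.mpr ‹IsNoetherian R M› S ⟨⊥, hbot⟩
  -- N₀ is an upper bound of S
  have htop : ∀ N ∈ S, N ≤ N₀ := by
    intro N hN
    have hsup : N ⊔ N₀ ∈ S := by
      have : {L : D | N ≤ L.1} ∩ {L : D | N₀ ≤ L.1} ∈ F := Filter.inter_mem hN hN₀S
      refine Filter.mem_of_superset this ?_
      rintro L ⟨h1, h2⟩
      exact sup_le (Set.mem_setOf_eq ▸ h1) (Set.mem_setOf_eq ▸ h2)
    have := hN₀max _ hsup
    have heq : N ⊔ N₀ = N₀ := by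
      rcases lt_or_eq_of_le (le_sup_right : N₀ ≤ N ⊔ N₀) with h | h
      · exact absurd h this
      · exact h.symm
    exact le_trans le_sup_left heq.le
  -- pick a point of C(N₀)
  have hne : {L : D | N₀ ≤ L.1} ∈ F := hN₀S
  obtain ⟨L₀, hL₀⟩ := Filter.nonempty_of_mem hne
  refine ⟨L₀, trivial, ?_⟩
  rw [structTop, nhds_generateFrom]
  refine le_iInf₂ fun U hU => ?_
  obtain ⟨hL₀U, N, rfl⟩ := hU
  rw [Filter.le_principal_iff]
  rcases F.mem_or_compl_mem {L : D | ¬ N ≤ L.1} with h | h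
  · exact h
  · exfalso
    have hNS : N ∈ S := by
      refine Filter.mem_of_superset h ?_
      intro L hL
      simpa using hL
    exact hL₀U (le_trans (htop N hNS) hL₀)
end

section
/- Let M be a module over a commutative ring R and D(M) a set of proper submodules of M with the structure-space topology. For every submodule N of M such that N ∈ C(N) (i.e., N ∈ D(M)), the set C(N) = {L ∈ D(M) : N ⊆ L} is an irreducible closed subset of D(M). -/
open TopologicalSpace

theorem stmt_9 {R M : Type*} [CommRing R] [AddCommGroup M] [Module R M]
    (D : Set (Submodule R M)) (hD : ∀ L ∈ D, L ≠ ⊤)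
    (N : Submodule R M) (hN : N ∈ D) :
    @IsClosed D (structTop R M D) {L : D | N ≤ L.1} ∧
    @IsIrreducible D (structTop R M D) {L : D | N ≤ L.1} := by
  letI := structTop R M D
  have key : ∀ U : Set D,
      TopologicalSpace.GenerateOpen
        {U : Set D | ∃ N' : Submodule R M, U = {L : D | ¬ N' ≤ L.1}} U →
      ∀ L : D, N ≤ L.1 → L ∈ U → (⟨N, hN⟩ : D) ∈ U := by
    intro U hU
    induction hU with
    | basic U hU =>
        obtain ⟨P, rfl⟩ := hU
        intro L hNL hL
        exact fun hPN => hL (hPN.trans hNL)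
    | univ => intro L _ _; trivial
    | inter U V _ _ ihU ihV =>
        intro L hNL hL
        exact ⟨ihU L hNL hL.1, ihV L hNL hL.2⟩
    | sUnion S _ ih =>
        intro L hNL hL
        obtain ⟨U, hU, hLU⟩ := hL
        exact ⟨U, hU, ih U hU L hNL hLU⟩
  constructor
  · rw [← isOpen_compl_iff]
    have hc : {L : D | N ≤ L.1}ᶜ = {L : D | ¬ N ≤ L.1} := rfl
    rw [hc]
    exact TopologicalSpace.GenerateOpen.basic _ ⟨N, rfl⟩
  · refine ⟨⟨⟨N, hN⟩, le_refl N⟩, ?_⟩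
    rintro U V hU hV ⟨x, hxS, hxU⟩ ⟨y, hyS, hyV⟩
    exact ⟨⟨N, hN⟩, le_refl N, key U hU x hxS hxU, key V hV y hyS hyV⟩
end

section
/- Let M be a module over a commutative ring R and let D(M) be the set of all proper submodules of M with the structure-space topology. Then every nonempty irreducible closed subset of D(M) has a unique generic point (i.e., D(M) is sober). -/
open TopologicalSpace Topology

private lemma structTop_open_down {R M : Type*} [CommRing R] [AddCommGroup M] [Module R M]
    {D : Set (Submodule R M)} {U : Set D}
    (hU : IsOpen[structTop R M D] U) :
    ∀ {L L' : D}, L.1 ≤ L'.1 → L' ∈ U → L ∈ U := by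
  induction hU with
  | basic V hV =>
      obtain ⟨N, rfl⟩ := hV
      intro L L' hle hL' h
      exact hL' (h.trans hle)
  | univ => intro L L' _ _; trivial
  | inter U V _ _ ihU ihV => intro L L' hle h; exact ⟨ihU hle h.1, ihV hle h.2⟩
  | sUnion F _ ih =>
      intro L L' hle h
      obtain ⟨t, ht, hmem⟩ := h
      exact ⟨t, ht, ih t ht hle hmem⟩

private lemma irred_subset_of_sUnion {X : Type*} [TopologicalSpace X] {S : Set X}
    (h : IsIrreducible S) {F : Set (Set X)} (hF : F.Finite)
    (hcl : ∀ t ∈ F, IsClosed t) (hsub : S ⊆ ⋃₀ F) : ∃ t ∈ F, S ⊆ t := by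
  have := (isIrreducible_iff_sUnion_isClosed.mp h) hF.toFinset
    (by simpa [hF.mem_toFinset] using hcl)
    (by simpa [hF.coe_toFinset] using hsub)
  simpa [hF.mem_toFinset] using this

theorem stmt_14 {R M : Type*} [CommRing R] [AddCommGroup M] [Module R M] :
    ∀ S : Set {L : Submodule R M | L ≠ ⊤},
      @IsIrreducible {L : Submodule R M | L ≠ ⊤} (structTop R M {L : Submodule R M | L ≠ ⊤}) S →
      @IsClosed {L : Submodule R M | L ≠ ⊤} (structTop R M {L : Submodule R M | L ≠ ⊤}) S →
      ∃! L₀ : {L : Submodule R M | L ≠ ⊤},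
        S = @closure {L : Submodule R M | L ≠ ⊤}
          (structTop R M {L : Submodule R M | L ≠ ⊤}) {L₀} := by
  set D : Set (Submodule R M) := {L : Submodule R M | L ≠ ⊤} with hD
  letI T : TopologicalSpace D := structTop R M D
  -- closed subbasic sets
  have hCclosed : ∀ N : Submodule R M, IsClosed ({L : D | N ≤ L.1}) := by
    intro N
    have h1 : IsOpen ({L : D | ¬ N ≤ L.1}) :=
      TopologicalSpace.GenerateOpen.basic _ ⟨N, rfl⟩
    have h2 : IsClosed ({L : D | ¬ N ≤ L.1}ᶜ) := h1.isClosed_compl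
    convert h2 using 1
    ext L; simp
  -- closure of a singleton
  have hclos : ∀ L₀ : D, closure {L₀} = {L : D | L₀.1 ≤ L.1} := by
    intro L₀
    apply le_antisymm
    · exact closure_minimal (by simp) (hCclosed L₀.1)
    · intro L hle
      rw [mem_closure_iff]
      intro U hU hLU
      exact ⟨L₀, structTop_open_down hU hle hLU, rfl⟩
  intro S hirr hcl
  obtain ⟨Lw, hLw⟩ := hirr.nonempty
  set N₀ : Submodule R M := sInf (Subtype.val '' S) with hN₀
  have hN₀le : ∀ L ∈ S, N₀ ≤ (L : D).1 := fun L hL => sInf_le ⟨L, hL, rfl⟩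
  have hN₀ne : N₀ ≠ ⊤ := by
    intro htop
    exact Lw.2 (top_le_iff.mp (htop ▸ hN₀le Lw hLw))
  set L₀ : D := ⟨N₀, hN₀ne⟩ with hL₀
  have hSeq : S = {L : D | N₀ ≤ L.1} := by
    apply le_antisymm
    · exact fun L hL => hN₀le L hL
    · intro L hle
      by_contra hLS
      -- L lies in the open complement of S; extract a basic open neighborhood
      have hBasis := TopologicalSpace.isTopologicalBasis_of_subbasis
        (s := {U : Set D | ∃ N : Submodule R M, U = {L : D | ¬ N ≤ L.1}}) rfl
      obtain ⟨V, hVmem, hLV, hVsub⟩ :=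
        hBasis.exists_subset_of_mem_open (show L ∈ Sᶜ from hLS) hcl.isOpen_compl
      obtain ⟨f, ⟨hffin, hfsub⟩, rfl⟩ := hVmem
      -- S ⊆ union of the complements of members of f
      have hScover : S ⊆ ⋃₀ (compl '' f) := by
        intro L' hL'
        by_contra hL'mem
        have : L' ∈ ⋂₀ f := by
          intro t ht
          by_contra h
          exact hL'mem ⟨tᶜ, ⟨t, ht, rfl⟩, h⟩
        exact (hVsub this) hL'
      have hclosF : ∀ t ∈ compl '' f, IsClosed t := by
        rintro _ ⟨t, ht, rfl⟩
        obtain ⟨N, rfl⟩ := hfsub ht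
        have := hCclosed N
        convert this using 1
        ext L'; simp
      obtain ⟨t, ht, hSt⟩ := irred_subset_of_sUnion hirr (hffin.image _) hclosF hScover
      obtain ⟨w, hw, rfl⟩ := ht
      obtain ⟨N, rfl⟩ := hfsub hw
      -- N ≤ every member of S, hence N ≤ N₀ ≤ L, contradicting L ∈ ⋂₀ f
      have hNle : N ≤ N₀ := le_sInf (by rintro _ ⟨L', hL', rfl⟩
                                        have := hSt hL'
                                        simpa using this)
      have hLin : L ∈ {L : D | ¬ N ≤ L.1} := hLV _ hw
      exact hLin (hNle.trans hle)
  refine ⟨L₀, ?_, ?_⟩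
  · show S = closure {L₀}
    rw [hclos L₀, hSeq]
  · intro L₁ hL₁
    have h1 : L₁ ∈ S := by rw [hL₁, hclos L₁]; simp only [Set.mem_setOf_eq]; exact le_rfl
    have h2 : L₀ ∈ S := by rw [hSeq]; simp only [Set.mem_setOf_eq]; exact le_rfl
    have h3 : L₁.1 ≤ L₀.1 := by
      have := h2
      rw [hL₁, hclos L₁] at this
      simpa using this
    exact Subtype.ext (le_antisymm h3 (hN₀le L₁ h1))
end

section
/- Let M be a module over a commutative ring R and let D(M) be the set of strongly irreducible proper submodules of M with the structure-space topology. Then D(M) is sober: every nonempty irreducible closed subset has a unique generic point. -/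
open TopologicalSpace

/-- The set of strongly irreducible proper submodules of `M`. -/
def stronglyIrreducibles (R M : Type*) [CommRing R] [AddCommGroup M] [Module R M] :
    Set (Submodule R M) :=
  {N : Submodule R M | N ≠ ⊤ ∧ ∀ L K : Submodule R M, L ⊓ K ≤ N → L ≤ N ∨ K ≤ N}

section Aux

variable {R M : Type*} [CommRing R] [AddCommGroup M] [Module R M]

lemma structTop_isOpen_basic (N : Submodule R M) :
    @IsOpen (stronglyIrreducibles R M) (structTop R M (stronglyIrreducibles R M))
      {L : stronglyIrreducibles R M | ¬ N ≤ L.1} :=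
  TopologicalSpace.GenerateOpen.basic _ ⟨N, rfl⟩

lemma structTop_isClosed_C (N : Submodule R M) :
    @IsClosed (stronglyIrreducibles R M) (structTop R M (stronglyIrreducibles R M))
      {L : stronglyIrreducibles R M | N ≤ L.1} := by
  letI := structTop R M (stronglyIrreducibles R M)
  rw [← isOpen_compl_iff]
  exact structTop_isOpen_basic N

lemma mem_closure_key (S : Set (stronglyIrreducibles R M))
    (hpre : @IsPreirreducible _ (structTop R M (stronglyIrreducibles R M)) S)
    (hne : S.Nonempty) (L : stronglyIrreducibles R M)
    (hL : ∀ N : Submodule R M, (∀ x ∈ S, N ≤ x.1) → N ≤ L.1) :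
    L ∈ @closure _ (structTop R M (stronglyIrreducibles R M)) S := by
  letI := structTop R M (stronglyIrreducibles R M)
  rw [mem_closure_iff]
  intro V hV
  induction hV with
  | basic U hU =>
    intro hLV
    obtain ⟨N, rfl⟩ := hU
    by_contra hc
    rw [Set.not_nonempty_iff_eq_empty, Set.eq_empty_iff_forall_notMem] at hc
    refine hLV (hL N fun x hx => ?_)
    by_contra hNx
    exact hc x ⟨hNx, hx⟩
  | univ =>
    intro _
    obtain ⟨x, hx⟩ := hne
    exact ⟨x, trivial, hx⟩
  | inter V₁ V₂ h₁ h₂ ih₁ ih₂ =>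
    rintro ⟨hL1, hL2⟩
    obtain ⟨x, hx1, hxS⟩ := ih₁ hL1
    obtain ⟨y, hy2, hyS⟩ := ih₂ hL2
    obtain ⟨z, hzS, hz1, hz2⟩ := hpre V₁ V₂ h₁ h₂ ⟨x, hxS, hx1⟩ ⟨y, hyS, hy2⟩
    exact ⟨z, ⟨hz1, hz2⟩, hzS⟩
  | sUnion T hT ih =>
    rintro ⟨V, hVT, hLV⟩
    obtain ⟨x, hxV, hxS⟩ := ih V hVT hLV
    exact ⟨x, ⟨V, hVT, hxV⟩, hxS⟩

lemma closure_singleton_eq (L₀ : stronglyIrreducibles R M) :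
    @closure _ (structTop R M (stronglyIrreducibles R M)) {L₀} =
      {L : stronglyIrreducibles R M | L₀.1 ≤ L.1} := by
  letI := structTop R M (stronglyIrreducibles R M)
  apply le_antisymm
  · exact closure_minimal (by simp) (structTop_isClosed_C L₀.1)
  · intro L hL
    refine mem_closure_key {L₀} isIrreducible_singleton.2 ⟨L₀, rfl⟩ L ?_
    intro N hN
    exact le_trans (hN L₀ rfl) hL

end Aux

theorem stmt_15 {R M : Type*} [CommRing R] [AddCommGroup M] [Module R M] :
    ∀ S : Set (stronglyIrreducibles R M),
      @IsIrreducible (stronglyIrreducibles R M) (structTop R M (stronglyIrreducibles R M)) S →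
      @IsClosed (stronglyIrreducibles R M) (structTop R M (stronglyIrreducibles R M)) S →
      ∃! L₀ : stronglyIrreducibles R M,
        S = @closure (stronglyIrreducibles R M)
          (structTop R M (stronglyIrreducibles R M)) {L₀} := by
  intro S hirr hcl
  letI := structTop R M (stronglyIrreducibles R M)
  have hne : S.Nonempty := hirr.nonempty
  have hpre : IsPreirreducible S := hirr.2
  set N₀ : Submodule R M := sInf (Subtype.val '' S) with hN₀
  have hN₀le : ∀ x ∈ S, N₀ ≤ (x : stronglyIrreducibles R M).1 :=
    fun x hx => sInf_le ⟨x, hx, rfl⟩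
  have hN₀mem : N₀ ∈ stronglyIrreducibles R M := by
    constructor
    · obtain ⟨x, hx⟩ := hne
      intro htop
      exact x.2.1 (top_le_iff.mp (htop ▸ hN₀le x hx))
    · intro A B hAB
      by_contra hc
      push_neg at hc
      obtain ⟨hA, hB⟩ := hc
      have hA' : ∃ x ∈ S, ¬ A ≤ x.1 := by
        by_contra h; push_neg at h
        exact hA (le_sInf (by rintro _ ⟨x, hx, rfl⟩; exact h x hx))
      have hB' : ∃ x ∈ S, ¬ B ≤ x.1 := by
        by_contra h; push_neg at h
        exact hB (le_sInf (by rintro _ ⟨x, hx, rfl⟩; exact h x hx))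
      obtain ⟨xa, hxaS, hxa⟩ := hA'
      obtain ⟨xb, hxbS, hxb⟩ := hB'
      obtain ⟨z, hzS, hz1, hz2⟩ := hpre {L | ¬ A ≤ L.1} {L | ¬ B ≤ L.1}
        (structTop_isOpen_basic A) (structTop_isOpen_basic B)
        ⟨xa, hxaS, hxa⟩ ⟨xb, hxbS, hxb⟩
      have : A ⊓ B ≤ z.1 := le_trans hAB (hN₀le z hzS)
      rcases z.2.2 A B this with h | h
      · exact hz1 h
      · exact hz2 h
  have hfirst : S = closure {(⟨N₀, hN₀mem⟩ : stronglyIrreducibles R M)} := by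
    rw [closure_singleton_eq]
    ext L
    constructor
    · intro hL; exact hN₀le L hL
    · intro hL
      have hLc : L ∈ closure S :=
        mem_closure_key S hpre hne L (fun N h => le_trans (le_sInf (by
          rintro _ ⟨x, hx, rfl⟩; exact h x hx)) hL)
      rwa [hcl.closure_eq] at hLc
  refine ⟨⟨N₀, hN₀mem⟩, hfirst, ?_⟩
  intro y hy
  have h1 : y ∈ S := hy ▸ subset_closure rfl
  have hle : N₀ ≤ y.1 := hN₀le y h1
  have h2 : (⟨N₀, hN₀mem⟩ : stronglyIrreducibles R M) ∈ S := hfirst ▸ subset_closure rfl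
  rw [hy, closure_singleton_eq] at h2
  exact Subtype.ext (le_antisymm h2 hle)
end

section
/- Let φ : M → M' be a surjective homomorphism of modules over a commutative ring R, and let D(M') and D(M) be the sets of all proper submodules of M' and M, respectively, with their structure-space topologies. The map φ_! : D(M') → D(M), N ↦ φ⁻¹(N), is a homeomorphism of D(M') onto the closed subspace C(ker φ) = {L ∈ D(M) : ker φ ⊆ L} of D(M). -/
/-!
For surjective `φ`, `comap φ` and `map φ` are mutually inverse order isomorphisms between the
submodules of `M'` and the submodules of `M` containing `ker φ`, and both preserve properness.
Continuity in the structure-space topology only has to be tested on the subbasic closed sets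
`C(N)`: `comap φ` pulls `C(N)` back to `C(map φ N)` (Galois connection), and on `C(ker φ)`,
`map φ` pulls `C(N)` back to `C(comap φ N)` (surjectivity).
-/

open TopologicalSpace

open Submodule Topology

section StructureSpace

variable {R M : Type*} [CommRing R] [AddCommGroup M] [Module R M] {D : Set (Submodule R M)}

theorem isClosed_setOf_le_structTop (N : Submodule R M) :
    IsClosed[structTop R M D] {L : D | N ≤ L.1} := by
  let := structTop R M D
  exact isOpen_compl_iff.mp (GenerateOpen.basic _ ⟨N, rfl⟩)

theorem continuous_structTop_iff {X : Type*} {t : TopologicalSpace X} {f : X → D} :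
    Continuous[t, structTop R M D] f ↔ ∀ N : Submodule R M, IsClosed[t] (f ⁻¹' {L | N ≤ L.1}) := by
  refine continuous_generateFrom_iff.trans ⟨fun h N ↦ ⟨h _ ⟨N, rfl⟩⟩, ?_⟩
  rintro h _ ⟨N, rfl⟩
  exact (h N).isOpen_compl

end StructureSpace

section Surjective

variable {R M M' : Type*} [CommRing R] [AddCommGroup M] [Module R M] [AddCommGroup M']
  [Module R M'] {φ : M →ₗ[R] M'}

theorem comap_ne_top_of_surjective (hφ : Function.Surjective φ) {N : Submodule R M'}
    (hN : N ≠ ⊤) : comap φ N ≠ ⊤ := by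
  rwa [← comap_top φ, (comap_injective_of_surjective hφ).ne_iff]

theorem map_ne_top_of_ker_le {L : Submodule R M} (hker : LinearMap.ker φ ≤ L) (hL : L ≠ ⊤) :
    map φ L ≠ ⊤ :=
  fun h ↦ hL (by rw [← comap_map_eq_self hker, h, comap_top])

theorem le_map_iff_comap_le_of_ker_le (hφ : Function.Surjective φ) {N : Submodule R M'}
    {L : Submodule R M} (hker : LinearMap.ker φ ≤ L) : N ≤ map φ L ↔ comap φ N ≤ L := by
  rw [← comap_le_comap_iff_of_surjective hφ, comap_map_eq_self hker]

variable {D' : Set (Submodule R M')} {D : Set (Submodule R M)}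

theorem continuous_comap_structTop (hcomap : ∀ N ∈ D', comap φ N ∈ D) :
    Continuous[structTop R M' D', structTop R M D]
      fun N : D' ↦ (⟨comap φ N, hcomap N N.2⟩ : D) := by
  refine continuous_structTop_iff.mpr fun N ↦ ?_
  simp only [Set.preimage_ofPred_eq, ← map_le_iff_le_comap]
  exact isClosed_setOf_le_structTop _

theorem continuous_map_structTop (hφ : Function.Surjective φ)
    (hmap : ∀ L ∈ D, LinearMap.ker φ ≤ L → map φ L ∈ D') :
    Continuous[(structTop R M D).induced Subtype.val, structTop R M' D']
      fun L : {L : D | LinearMap.ker φ ≤ L.1} ↦ (⟨map φ L.1, hmap L.1 L.1.2 L.2⟩ : D') := by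
  let := structTop R M D
  refine continuous_structTop_iff.mpr fun N ↦ ?_
  have hpre : {L : {L : D | LinearMap.ker φ ≤ L.1} | N ≤ map φ L.1.1} =
      Subtype.val ⁻¹' {L : D | comap φ N ≤ L.1} :=
    Set.ext fun L ↦ le_map_iff_comap_le_of_ker_le hφ L.2
  change IsClosed {L : {L : D | LinearMap.ker φ ≤ L.1} | N ≤ map φ L.1.1}
  rw [hpre]
  exact (isClosed_setOf_le_structTop _).preimage continuous_subtype_val

def comapHomeomorph (hφ : Function.Surjective φ) (hcomap : ∀ N ∈ D', comap φ N ∈ D)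
    (hmap : ∀ L ∈ D, LinearMap.ker φ ≤ L → map φ L ∈ D') :
    letI := structTop R M' D'
    letI := structTop R M D
    D' ≃ₜ {L : D | LinearMap.ker φ ≤ L.1} :=
  letI := structTop R M' D'
  letI := structTop R M D
  { toFun N := ⟨⟨comap φ N, hcomap N N.2⟩, LinearMap.ker_le_comap φ⟩
    invFun L := ⟨map φ L.1, hmap L.1 L.1.2 L.2⟩
    left_inv N := Subtype.ext (map_comap_eq_of_surjective hφ N)
    right_inv L := Subtype.ext (Subtype.ext (comap_map_eq_self L.2))
    continuous_toFun := (continuous_comap_structTop hcomap).subtype_mk _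
    continuous_invFun := continuous_map_structTop hφ hmap }

end Surjective

theorem stmt_19 {R M M' : Type*} [CommRing R] [AddCommGroup M] [Module R M]
    [AddCommGroup M'] [Module R M']
    (φ : M →ₗ[R] M') (hφ : Function.Surjective φ) :
    letI : TopologicalSpace {L : Submodule R M | L ≠ ⊤} :=
      structTop R M {L : Submodule R M | L ≠ ⊤}
    letI : TopologicalSpace {L : Submodule R M' | L ≠ ⊤} :=
      structTop R M' {L : Submodule R M' | L ≠ ⊤}
    IsClosed {L : {L : Submodule R M | L ≠ ⊤} | LinearMap.ker φ ≤ L.1} ∧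
    ∃ e : {L : Submodule R M' | L ≠ ⊤} ≃ₜ
        {L : {L : Submodule R M | L ≠ ⊤} | LinearMap.ker φ ≤ L.1},
      ∀ N : {L : Submodule R M' | L ≠ ⊤},
        ((e N).1 : Submodule R M) = Submodule.comap φ N.1 :=
  ⟨isClosed_setOf_le_structTop _,
    comapHomeomorph hφ (fun _ ↦ comap_ne_top_of_surjective hφ)
      (fun _ hL hker ↦ map_ne_top_of_ker_le hker hL),
    fun _ ↦ rfl⟩
end
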